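/- In the standing setup, for every k ∈ ℤ one has ⟨a_k, σ_1⟩ = (1/32)(31λ − 1). -/

import Mathlib

/-- The `l`-eigenspace of the adjoint map `x ↦ a * x` of an element `a` of a commutative
nonassociative algebra. -/
def eig (k : Type*) {A : Type*} [Field k] [NonUnitalNonAssocCommRing A]
    [Module k A] [SMulCommClass k A A] [IsScalarTower k A A] (a : A) (l : k) :
    Submodule k A :=
  Module.End.eigenspace (LinearMap.mul k A a) l

/-- `a` is a `V(4,3)`-axis: an idempotent which is semisimple with spectrum in
`{1, 0, 1/4, 1/32}`, primitive, and whose eigenspaces satisfy the Ising fusion rules. -/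
def IsV43Axis (k : Type*) {A : Type*} [Field k] [NonUnitalNonAssocCommRing A]
    [Module k A] [SMulCommClass k A A] [IsScalarTower k A A] (a : A) : Prop :=
  a * a = a ∧
  (eig k a 1 ⊔ eig k a 0 ⊔ eig k a (1/4) ⊔ eig k a (1/32)) = ⊤ ∧
  eig k a 1 = Submodule.span k ({a} : Set A) ∧
  (∀ x ∈ eig k a 0, ∀ y ∈ eig k a 0, x * y ∈ eig k a 0) ∧
  (∀ x ∈ eig k a 0, ∀ y ∈ eig k a (1/4), x * y ∈ eig k a (1/4)) ∧
  (∀ x ∈ eig k a 0, ∀ y ∈ eig k a (1/32), x * y ∈ eig k a (1/32)) ∧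
  (∀ x ∈ eig k a (1/4), ∀ y ∈ eig k a (1/4), x * y ∈ eig k a 1 ⊔ eig k a 0) ∧
  (∀ x ∈ eig k a (1/4), ∀ y ∈ eig k a (1/32), x * y ∈ eig k a (1/32)) ∧
  (∀ x ∈ eig k a (1/32), ∀ y ∈ eig k a (1/32),
      x * y ∈ eig k a 1 ⊔ eig k a 0 ⊔ eig k a (1/4))

/-- The doubly infinite sequence of axes `a_j`, `j ∈ ℤ`, with `a_{2i} = ρ^i(a_0)` and
`a_{2i+1} = ρ^i(a_1)`, where `ρ = τ1 ∘ τ0`. -/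
def aSeq {k : Type*} {A : Type*} [Field k] [NonUnitalNonAssocCommRing A]
    [Module k A] [SMulCommClass k A A] [IsScalarTower k A A]
    (τ0 τ1 : A ≃ₗ[k] A) (a0 a1 : A) (j : ℤ) : A :=
  if Even j then ((τ0.trans τ1) ^ (j / 2)) a0 else ((τ0.trans τ1) ^ ((j - 1) / 2)) a1

/-! A Miyamoto involution `τ(b)` fixes `σ(b, c) = bc - (1/32)(b + c)` for every `c`: writing
`c = p + u` with `u ∈ A_{1/32}(b)` and `p` in the other eigenspaces, `τ(b)` negates `u`, and the
two occurrences of `u` in `σ(b, c)` cancel because `bu = u/32`. Hence `σ_1 = σ(a_0, a_1)` is fixed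
by `τ_0`, `τ_1` and so by every power of `ρ`; as these preserve the form,
`⟨a_j, σ_1⟩ = ⟨ρ^i a_ε, σ_1⟩ = ⟨a_ε, σ_1⟩` with `ε ∈ {0, 1}`, which is computed directly from
`a_ε² = a_ε` and associativity of the form. -/

section Sigma

variable {k : Type*} [Field k] {A : Type*} [NonUnitalNonAssocCommRing A] [Module k A]

variable (k) in
def axisSigma (b c : A) : A := b * c - (1/32 : k) • (b + c)

lemma axisSigma_comm (b c : A) : axisSigma k b c = axisSigma k c b := by
  rw [axisSigma, axisSigma, mul_comm, add_comm]

lemma form_axisSigma_left [NeZero (2 : k)] (B : LinearMap.BilinForm k A)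
    (hassoc : ∀ x y z : A, B (x * y) z = B x (y * z)) {b : A} (hb : b * b = b) (hbb : B b b = 1)
    (c : A) : B b (axisSigma k b c) = (1/32 : k) * (31 * B b c - 1) := by
  have hbbc : B b (b * c) = B b c := by rw [← hassoc, hb]
  have h32 : (32 : k) ≠ 0 := by
    rw [show (32 : k) = 2 ^ 5 by norm_num]; exact pow_ne_zero 5 two_ne_zero
  simp only [axisSigma, map_sub, map_smul, map_add, smul_eq_mul, hbbc, hbb]
  field_simp
  ring

variable [SMulCommClass k A A] [IsScalarTower k A A]

lemma mem_eig_iff {a x : A} {l : k} : x ∈ eig k a l ↔ a * x = l • x := by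
  rw [eig, Module.End.mem_eigenspace_iff, LinearMap.mul_apply']

lemma map_axisSigma_eq_self {b : A} (hb : b * b = b)
    (hsum : eig k b 1 ⊔ eig k b 0 ⊔ eig k b (1/4) ⊔ eig k b (1/32) = ⊤)
    {τ : A →ₗ[k] A} (hτp : ∀ x ∈ eig k b 1 ⊔ eig k b 0 ⊔ eig k b (1/4), τ x = x)
    (hτm : ∀ x ∈ eig k b (1/32), τ x = -x) (hτmul : ∀ x y : A, τ (x * y) = τ x * τ y)
    (c : A) : τ (axisSigma k b c) = axisSigma k b c := by
  obtain ⟨p, hp, u, hu, rfl⟩ := Submodule.mem_sup.mp (hsum ▸ Submodule.mem_top : c ∈ _)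
  have hb1 : b ∈ eig k b 1 := mem_eig_iff.mpr (by rw [hb, one_smul])
  have hτb : τ b = b := hτp b (Submodule.mem_sup_left (Submodule.mem_sup_left hb1))
  have hbu : b * u = (1/32 : k) • u := mem_eig_iff.mp hu
  simp only [axisSigma, map_sub, map_smul, map_add, hτmul, hτb, hτp p hp, hτm u hu, mul_add, hbu]
  module

end Sigma

lemma form_zpow_apply_of_apply_eq_self {k A : Type*} [CommSemiring k] [AddCommMonoid A]
    [Module k A] (B : LinearMap.BilinForm k A) {ρ : A ≃ₗ[k] A}
    (hρB : ∀ x y : A, B (ρ x) (ρ y) = B x y) {s : A} (hs : ρ s = s) (m : ℤ) (x : A) :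
    B ((ρ ^ m) x) s = B x s := by
  have step : ∀ y, B (ρ y) s = B y s := fun y => by rw [← hρB y s, hs]
  induction m using Int.induction_on generalizing x with
  | zero => rfl
  | succ n ih => rw [zpow_add_one, LinearEquiv.mul_apply, ih, step]
  | pred n ih =>
    rw [zpow_sub_one, LinearEquiv.mul_apply, ih, ← step, LinearEquiv.coe_inv,
      LinearEquiv.apply_symm_apply]

theorem form_with_sigma1_general
    {k : Type*} [Field k] [CharZero k] {A : Type*} [NonUnitalNonAssocCommRing A]
    [Module k A] [SMulCommClass k A A] [IsScalarTower k A A]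
    (B : LinearMap.BilinForm k A)
    (hsymm : ∀ x y : A, B x y = B y x)
    (hassoc : ∀ x y z : A, B (x * y) z = B x (y * z))
    (a0 a1 : A) (ha0 : IsV43Axis k a0) (ha1 : IsV43Axis k a1)
    (hn0 : B a0 a0 = 1) (hn1 : B a1 a1 = 1)
    (τ0 τ1 : A ≃ₗ[k] A)
    (hτ0p : ∀ x ∈ eig k a0 1 ⊔ eig k a0 0 ⊔ eig k a0 (1/4), τ0 x = x)
    (hτ0m : ∀ x ∈ eig k a0 (1/32), τ0 x = -x)
    (hτ1p : ∀ x ∈ eig k a1 1 ⊔ eig k a1 0 ⊔ eig k a1 (1/4), τ1 x = x)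
    (hτ1m : ∀ x ∈ eig k a1 (1/32), τ1 x = -x)
    (hτ0mul : ∀ x y : A, τ0 (x * y) = τ0 x * τ0 y)
    (hτ1mul : ∀ x y : A, τ1 (x * y) = τ1 x * τ1 y)
    (hτ0B : ∀ x y : A, B (τ0 x) (τ0 y) = B x y)
    (hτ1B : ∀ x y : A, B (τ1 x) (τ1 y) = B x y)
    (a : ℤ → A) (ha : a = aSeq τ0 τ1 a0 a1)
    (lm : k) (hlm : lm = B a0 a1)
    (σ1 : A)
    (hσ1 : σ1 = a0 * a1 - (1/32 : k) • (a0 + a1)) :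
    ∀ j : ℤ, B (a j) σ1 = (1/32 : k) * (31 * lm - 1) := by
  change σ1 = axisSigma k a0 a1 at hσ1
  have hfix0 : τ0 σ1 = σ1 := hσ1 ▸ map_axisSigma_eq_self ha0.1 ha0.2.1 hτ0p hτ0m hτ0mul a1
  have hfix1 : τ1 σ1 = σ1 := by
    rw [hσ1, axisSigma_comm]; exact map_axisSigma_eq_self ha1.1 ha1.2.1 hτ1p hτ1m hτ1mul a0
  have hρB : ∀ x y : A, B (τ0.trans τ1 x) (τ0.trans τ1 y) = B x y := fun x y => by
    simp only [LinearEquiv.trans_apply, hτ1B, hτ0B]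
  have hρ : ∀ (m : ℤ) (x : A), B (((τ0.trans τ1) ^ m) x) σ1 = B x σ1 :=
    form_zpow_apply_of_apply_eq_self B hρB (by rw [LinearEquiv.trans_apply, hfix0, hfix1])
  intro j
  subst ha hlm
  unfold aSeq
  split_ifs
  · rw [hρ, hσ1, form_axisSigma_left B hassoc ha0.1 hn0]
  · rw [hρ, hσ1, axisSigma_comm, form_axisSigma_left B hassoc ha1.1 hn1, hsymm a1 a0]

theorem form_with_sigma1
    {k : Type*} [Field k] [CharZero k] {A : Type*} [NonUnitalNonAssocCommRing A]
    [Module k A] [SMulCommClass k A A] [IsScalarTower k A A]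
    (B : LinearMap.BilinForm k A)
    (hsymm : ∀ x y : A, B x y = B y x)
    (hassoc : ∀ x y z : A, B (x * y) z = B x (y * z))
    (a0 a1 : A) (ha0 : IsV43Axis k a0) (ha1 : IsV43Axis k a1)
    (hn0 : B a0 a0 = 1) (hn1 : B a1 a1 = 1)
    (τ0 τ1 : A ≃ₗ[k] A)
    (hτ0p : ∀ x ∈ eig k a0 1 ⊔ eig k a0 0 ⊔ eig k a0 (1/4), τ0 x = x)
    (hτ0m : ∀ x ∈ eig k a0 (1/32), τ0 x = -x)
    (hτ1p : ∀ x ∈ eig k a1 1 ⊔ eig k a1 0 ⊔ eig k a1 (1/4), τ1 x = x)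
    (hτ1m : ∀ x ∈ eig k a1 (1/32), τ1 x = -x)
    (hτ0mul : ∀ x y : A, τ0 (x * y) = τ0 x * τ0 y)
    (hτ1mul : ∀ x y : A, τ1 (x * y) = τ1 x * τ1 y)
    (hτ0B : ∀ x y : A, B (τ0 x) (τ0 y) = B x y)
    (hτ1B : ∀ x y : A, B (τ1 x) (τ1 y) = B x y)
    (a : ℤ → A) (ha : a = aSeq τ0 τ1 a0 a1)
    (lm mu : k) (hlm : lm = B a0 a1) (hmu : mu = B a0 (a 2))
    (σ1 σ2e σ2o : A)
    (hσ1 : σ1 = a0 * a1 - (1/32 : k) • (a0 + a1))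
    (hσ2e : σ2e = a0 * a 2 - (1/32 : k) • (a0 + a 2))
    (hσ2o : σ2o = a (-1) * a1 - (1/32 : k) • (a (-1) + a1)) :
    ∀ j : ℤ, B (a j) σ1 = (1/32 : k) * (31 * lm - 1) :=
  form_with_sigma1_general B hsymm hassoc a0 a1 ha0 ha1 hn0 hn1 τ0 τ1 hτ0p hτ0m hτ1p hτ1m hτ0mul
    hτ1mul hτ0B hτ1B a ha lm hlm σ1 hσ1
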